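/- Any oblique decision tree of depth T (a piecewise constant function defined by recursive halfspace splits) can be represented by a canonical locally constant network with one hidden layer of 2^T − 1 ReLU neurons: there exist weights W ∈ ℝ^{(2^T−1)×D}, biases b ∈ ℝ^{2^T−1}, and a table g : {0,1}^{2^T−1} → ℝ^L such that for all x ∈ ℝ^D, g applied to the activation pattern (𝟙[W_k x + b_k ≥ 0])_k equals the tree's output at x. -/

import Mathlib

/-- The root-to-depth-`i` decision pattern of an oblique decision tree with
decision weights `ω` and biases `β` indexed by binary decision prefixes. -/
noncomputable def treePath {D : ℕ} (ω : List Bool → (Fin D → ℝ)) (β : List Bool → ℝ)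
    (x : Fin D → ℝ) : ℕ → List Bool
  | 0 => []
  | (i + 1) =>
      let s := treePath ω β x i
      s ++ [if 0 ≤ ∑ j, ω s j * x j + β s then true else false]

/-!
Give each of the `∑ i < T, 2 ^ i = 2 ^ T - 1` internal nodes of the tree its own neuron,
computing that node's split. Whatever `x` is, the activation pattern then contains every
decision the tree could take, and the table `g` walks down the tree reading off the decision
at the current node from the neuron assigned to it.
-/

def followPath (d : List Bool → Bool) : ℕ → List Bool
  | 0 => []
  | (i + 1) => followPath d i ++ [d (followPath d i)]

@[simp]
lemma followPath_length (d : List Bool → Bool) (i : ℕ) : (followPath d i).length = i := by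
  induction i with
  | zero => rfl
  | succ i ih => simp [followPath, ih]

lemma followPath_congr {d d' : List Bool → Bool} {i : ℕ}
    (h : ∀ s : List Bool, s.length < i → d s = d' s) : followPath d i = followPath d' i := by
  induction i with
  | zero => rfl
  | succ i ih =>
    have hprefix : followPath d i = followPath d' i :=
      ih fun s hs => h s (Nat.lt_succ_of_lt hs)
    simp only [followPath, hprefix, h (followPath d' i) (by simp)]

lemma followPath_extend_comp {K : Type*} {κ : K → List Bool} {i : ℕ}
    (hκ : ∀ s : List Bool, s.length < i → s ∈ Set.range κ) (d : List Bool → Bool)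
    (e : List Bool → Bool) : followPath (Function.extend κ (d ∘ κ) e) i = followPath d i := by
  refine followPath_congr fun s hs => ?_
  obtain ⟨k, rfl⟩ := hκ s hs
  exact (Function.FactorsThrough.rfl.comp_left d).extend_apply e k

section Tree

variable {D : ℕ} (ω : List Bool → (Fin D → ℝ)) (β : List Bool → ℝ) (x : Fin D → ℝ)

noncomputable def nodeDecision (s : List Bool) : Bool :=
  if 0 ≤ ∑ j, ω s j * x j + β s then true else false

lemma treePath_eq_followPath (i : ℕ) : treePath ω β x i = followPath (nodeDecision ω β x) i := by
  induction i with
  | zero => rfl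
  | succ i ih => simp only [treePath, followPath, nodeDecision, ih]

end Tree

lemma card_sigma_vector_bool (T : ℕ) :
    Fintype.card (Σ i : Fin T, List.Vector Bool i) = 2 ^ T - 1 := by
  rw [Fintype.card_sigma]
  simp only [card_vector, Fintype.card_bool]
  rw [Fin.sum_univ_eq_sum_range (fun i => 2 ^ i), Nat.geomSum_eq le_rfl]
  simp

lemma exists_fin_range_supset_length_lt (T : ℕ) :
    ∃ κ : Fin (2 ^ T - 1) → List Bool, ∀ s : List Bool, s.length < T → s ∈ Set.range κ := by
  let e := Fintype.equivFinOfCardEq (card_sigma_vector_bool T)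
  refine ⟨fun k => (e.symm k).2.toList, fun s hs => ⟨e ⟨⟨s.length, hs⟩, ⟨s, rfl⟩⟩, ?_⟩⟩
  dsimp only
  rw [Equiv.symm_apply_apply]
  rfl

/-- any oblique decision tree of depth T can be represented by a
canonical locally constant network with one hidden layer of 2^T − 1 neurons. -/
theorem tree_to_locally_constant_network {D L T : ℕ}
    (ω : List Bool → (Fin D → ℝ)) (β : List Bool → ℝ)
    (v : List Bool → (Fin L → ℝ)) :
    ∃ (W : Fin (2 ^ T - 1) → (Fin D → ℝ)) (b : Fin (2 ^ T - 1) → ℝ)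
      (g : (Fin (2 ^ T - 1) → Bool) → (Fin L → ℝ)),
      ∀ x : Fin D → ℝ,
        g (fun k => if 0 ≤ ∑ j, W k j * x j + b k then true else false)
          = v (treePath ω β x T) := by
  obtain ⟨κ, hκ⟩ := exists_fin_range_supset_length_lt T
  refine ⟨ω ∘ κ, β ∘ κ, fun a => v (followPath (Function.extend κ a fun _ => false) T),
    fun x => ?_⟩
  rw [treePath_eq_followPath]
  exact congrArg v (followPath_extend_comp hκ (nodeDecision ω β x) _)
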